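/- arXiv:2401.14863 — 3 statements merged into one kernel-verified Lean document; each statement's English description precedes it below -/
import Mathlib

section
/- In a geodesic metric space, if every geodesic triangle is δ₀-slim, then there exists δ₁ ≥ 0 depending only on δ₀ such that every geodesic triangle is δ₁-thin; conversely, if every geodesic triangle is δ₁-thin, then there exists δ₀ ≥ 0 depending only on δ₁ such that every geodesic triangle is δ₀-slim. -/
open Metric Set

def IsGeodesic {X : Type*} [MetricSpace X] (γ : ℝ → X) (a b : X) : Prop :=
  γ 0 = a ∧ γ (dist a b) = b ∧
    ∀ s ∈ Set.Icc (0:ℝ) (dist a b), ∀ t ∈ Set.Icc (0:ℝ) (dist a b),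
      dist (γ s) (γ t) = |s - t|

def GeodSide {X : Type*} [MetricSpace X] (γ : ℝ → X) (a b : X) : Set X :=
  γ '' Set.Icc (0:ℝ) (dist a b)

def GeodesicSpace (X : Type*) [MetricSpace X] : Prop :=
  ∀ a b : X, ∃ γ : ℝ → X, IsGeodesic γ a b

def SlimTriangle {X : Type*} [MetricSpace X] (δ : ℝ) (a b c : X) (f g h : ℝ → X) : Prop :=
  (∀ p ∈ GeodSide f a b, Metric.infDist p (GeodSide g b c ∪ GeodSide h a c) ≤ δ) ∧
  (∀ p ∈ GeodSide g b c, Metric.infDist p (GeodSide f a b ∪ GeodSide h a c) ≤ δ) ∧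
  (∀ p ∈ GeodSide h a c, Metric.infDist p (GeodSide f a b ∪ GeodSide g b c) ≤ δ)

def DeltaHyperbolic (X : Type*) [MetricSpace X] (δ : ℝ) : Prop :=
  ∀ (a b c : X) (f g h : ℝ → X),
    IsGeodesic f a b → IsGeodesic g b c → IsGeodesic h a c →
      SlimTriangle δ a b c f g h

noncomputable def gromovProd {X : Type*} [MetricSpace X] (a c b : X) : ℝ :=
  (dist a b + dist c b - dist a c) / 2

noncomputable def crossRatio {X : Type*} [MetricSpace X] (a b c d : X) : ℝ :=
  (dist a d - dist d c + dist b c - dist a b) / 2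

def IsQuasigeodesic {X : Type*} [MetricSpace X] (lam eps : ℝ) (γ : ℝ → X) (L : ℝ) : Prop :=
  ∀ s ∈ Set.Icc (0:ℝ) L, ∀ t ∈ Set.Icc (0:ℝ) L,
    |s - t| / lam - eps ≤ dist (γ s) (γ t) ∧ dist (γ s) (γ t) ≤ lam * |s - t| + eps

def QIEmbedding {X Y : Type*} [MetricSpace X] [MetricSpace Y] (lam eps : ℝ) (φ : X → Y) : Prop :=
  ∀ x x' : X, dist x x' / lam - eps ≤ dist (φ x) (φ x') ∧
    dist (φ x) (φ x') ≤ lam * dist x x' + eps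

def ThinTriangle {X : Type*} [MetricSpace X] (δ : ℝ) (a b c : X) (f g h : ℝ → X) : Prop :=
  ∃ α β γ₀ : ℝ, 0 ≤ α ∧ 0 ≤ β ∧ 0 ≤ γ₀ ∧
    α + β = dist a b ∧ α + γ₀ = dist a c ∧ β + γ₀ = dist b c ∧
    (∀ t ∈ Set.Icc (0:ℝ) α, dist (f t) (h t) ≤ δ) ∧
    (∀ t ∈ Set.Icc (0:ℝ) β, dist (f (dist a b - t)) (g t) ≤ δ) ∧
    (∀ t ∈ Set.Icc (0:ℝ) γ₀, dist (h (dist a c - t)) (g (dist b c - t)) ≤ δ)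

section Helpers
variable {X : Type*} [MetricSpace X]

lemma geo_dist_start {γ : ℝ → X} {a b : X} (h : IsGeodesic γ a b)
    {s : ℝ} (hs : s ∈ Icc (0:ℝ) (dist a b)) : dist a (γ s) = s := by
  have key := h.2.2 0 ⟨le_refl _, dist_nonneg⟩ s hs
  rw [h.1] at key
  rw [key, abs_of_nonpos (by linarith [hs.1])]
  ring

lemma geo_dist_end {γ : ℝ → X} {a b : X} (h : IsGeodesic γ a b)
    {s : ℝ} (hs : s ∈ Icc (0:ℝ) (dist a b)) : dist b (γ s) = dist a b - s := by
  have key := h.2.2 (dist a b) ⟨dist_nonneg, le_refl _⟩ s hs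
  rw [h.2.1] at key
  rw [key, abs_of_nonneg (by linarith [hs.2])]

lemma geo_rev {γ : ℝ → X} {a b : X} (h : IsGeodesic γ a b) :
    IsGeodesic (fun t => γ (dist a b - t)) b a := by
  have hd : dist b a = dist a b := dist_comm b a
  refine ⟨by simp [h.2.1], by simp [hd, h.1], ?_⟩
  intro s hs t ht
  rw [hd] at hs ht
  have key := h.2.2 (dist a b - s) ⟨by linarith [hs.2], by linarith [hs.1]⟩
    (dist a b - t) ⟨by linarith [ht.2], by linarith [ht.1]⟩
  simp only [key]
  rw [show (dist a b - s) - (dist a b - t) = t - s by ring, abs_sub_comm]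

lemma geoSide_rev {γ : ℝ → X} {a b : X} :
    GeodSide (fun t => γ (dist a b - t)) b a = GeodSide γ a b := by
  unfold GeodSide
  rw [dist_comm b a, ← Set.image_image γ (fun t => dist a b - t), Set.image_const_sub_Icc]
  simp

lemma geo_mem_side {γ : ℝ → X} {a b : X} {s : ℝ}
    (hs : s ∈ Icc (0:ℝ) (dist a b)) : γ s ∈ GeodSide γ a b :=
  ⟨s, hs, rfl⟩

lemma key_lemma {δ₀ : ℝ} (hδ : 0 ≤ δ₀) {v u w : X}
    {p q : ℝ → X} {o : Set X}
    (hp : IsGeodesic p v u) (hq : IsGeodesic q v w)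
    (hoSum : ∀ x ∈ o, dist u x + dist w x = dist u w)
    (hoGeo : ∀ x ∈ o, ∀ x' ∈ o, dist x x' = |dist u x - dist u x'|)
    (hsp : ∀ s ∈ Icc (0:ℝ) (dist v u), infDist (p s) (GeodSide q v w ∪ o) ≤ δ₀)
    (hsq : ∀ s ∈ Icc (0:ℝ) (dist v w), infDist (q s) (GeodSide p v u ∪ o) ≤ δ₀)
    {t : ℝ} (ht : t ∈ Icc (0:ℝ) ((dist v u + dist v w - dist u w)/2)) :
    dist (p t) (q t) ≤ 6 * δ₀ := by
  have tri1 : dist v w ≤ dist v u + dist u w := dist_triangle v u w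
  have tri2 : dist v u ≤ dist v w + dist u w := by
    have := dist_triangle v w u
    rwa [dist_comm w u] at this
  have htu : t ∈ Icc (0:ℝ) (dist v u) := ⟨ht.1, by linarith [ht.2]⟩
  have htw : t ∈ Icc (0:ℝ) (dist v w) := ⟨ht.1, by linarith [ht.2]⟩
  -- distances of p t, q t to vertices
  have dvpt : dist v (p t) = t := geo_dist_start hp htu
  have dupt : dist u (p t) = dist v u - t := geo_dist_end hp htu
  have dvqt : dist v (q t) = t := geo_dist_start hq htw
  have dwqt : dist w (q t) = dist v w - t := geo_dist_end hq htw
  have hS1ne : (GeodSide q v w ∪ o).Nonempty :=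
    ⟨q 0, Or.inl (geo_mem_side ⟨le_refl _, dist_nonneg⟩)⟩
  have hS2ne : (GeodSide p v u ∪ o).Nonempty :=
    ⟨p 0, Or.inl (geo_mem_side ⟨le_refl _, dist_nonneg⟩)⟩
  refine le_of_forall_pos_le_add ?_
  intro ε hε
  obtain ⟨η, hη⟩ : ∃ η : ℝ, η = δ₀ + ε / 6 := ⟨_, rfl⟩
  have hηpos : 0 < η := by rw [hη]; positivity
  have hy : ∃ y ∈ GeodSide q v w ∪ o, dist (p t) y < η := by
    rw [← Metric.infDist_lt_iff hS1ne]
    calc infDist (p t) (GeodSide q v w ∪ o) ≤ δ₀ := hsp t htu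
      _ < η := by simp [hη]; positivity
  obtain ⟨y, hy, hdy⟩ := hy
  rcases hy with hy | hy
  · -- y on the geodesic q : conclude directly
    obtain ⟨s, hs, rfl⟩ := hy
    have dvqs : dist v (q s) = s := geo_dist_start hq hs
    have habs : |dist (q s) v - dist (p t) v| ≤ dist (q s) (p t) := abs_dist_sub_le _ _ _
    rw [dist_comm (q s) v, dist_comm (p t) v, dvqs, dvpt] at habs
    have hst : |s - t| < η := lt_of_le_of_lt (by rwa [dist_comm] at habs) hdy
    have : dist (p t) (q t) ≤ dist (p t) (q s) + dist (q s) (q t) := dist_triangle _ _ _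
    rw [hq.2.2 s hs t htw] at this
    calc dist (p t) (q t) ≤ dist (p t) (q s) + |s - t| := this
      _ ≤ η + η := by linarith
      _ ≤ 6 * δ₀ + ε := by simp [hη]; linarith
  · -- y ∈ o : derive t ≥ μ - η
    have duy_ge : dist v u - t - η ≤ dist u y := by
      have := dist_triangle u (p t) y
      have h2 := dist_triangle u y (p t)
      rw [dist_comm y (p t)] at h2
      linarith [dupt, h2]
    have duy_le : dist u y ≤ dist v u - t + η := by
      have := dist_triangle u (p t) y
      linarith [dupt]
    have dwy_ge : dist v w - t - η ≤ dist w y := by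
      have h1 : dist v w ≤ dist v (p t) + dist (p t) w := dist_triangle _ _ _
      have h2 : dist (p t) w ≤ dist (p t) y + dist y w := dist_triangle _ _ _
      rw [dist_comm y w] at h2
      linarith [dvpt]
    have hsum := hoSum y hy
    have tmu : (dist v u + dist v w - dist u w)/2 - t ≤ η := by linarith [duy_ge, dwy_ge, hsum]
    -- second approximation: for q t
    have hz : ∃ z ∈ GeodSide p v u ∪ o, dist (q t) z < η := by
      rw [← Metric.infDist_lt_iff hS2ne]
      calc infDist (q t) (GeodSide p v u ∪ o) ≤ δ₀ := hsq t htw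
        _ < η := by simp [hη]; positivity
    obtain ⟨z, hz, hdz⟩ := hz
    rcases hz with hz | hz
    · obtain ⟨s, hs, rfl⟩ := hz
      have dvps : dist v (p s) = s := geo_dist_start hp hs
      have habs : |dist (p s) v - dist (q t) v| ≤ dist (p s) (q t) := abs_dist_sub_le _ _ _
      rw [dist_comm (p s) v, dist_comm (q t) v, dvps, dvqt] at habs
      have hst : |s - t| < η := lt_of_le_of_lt (by rwa [dist_comm] at habs) hdz
      have h3 : dist (p t) (q t) ≤ dist (p t) (p s) + dist (p s) (q t) := dist_triangle _ _ _
      rw [hp.2.2 t htu s hs] at h3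
      have h4 : |t - s| = |s - t| := abs_sub_comm _ _
      rw [dist_comm (p s) (q t)] at h3
      calc dist (p t) (q t) ≤ |t - s| + dist (q t) (p s) := h3
        _ ≤ η + η := by rw [h4]; linarith
        _ ≤ 6 * δ₀ + ε := by simp [hη]; linarith
    · -- both y, z ∈ o
      have dwz_le : dist w z ≤ dist v w - t + η := by
        have := dist_triangle w (q t) z
        linarith [dwqt]
      have dwz_ge : dist v w - t - η ≤ dist w z := by
        have h2 := dist_triangle w z (q t)
        rw [dist_comm z (q t)] at h2
        linarith [dwqt]
      have hsumz := hoSum z hz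
      have dyz : dist y z = |dist u y - dist u z| := hoGeo y hy z hz
      have habs : |dist u y - dist u z| ≤ 4 * η := by
        rcases abs_cases (dist u y - dist u z) with ⟨he, _⟩ | ⟨he, _⟩ <;>
          rw [he] <;> linarith [ht.2]
      have h3 : dist (p t) (q t) ≤ dist (p t) y + dist y z + dist z (q t) := by
        calc dist (p t) (q t) ≤ dist (p t) y + dist y (q t) := dist_triangle _ _ _
          _ ≤ dist (p t) y + (dist y z + dist z (q t)) := by
              linarith [dist_triangle y z (q t)]
          _ = _ := by ring
      rw [dist_comm z (q t)] at h3
      calc dist (p t) (q t) ≤ dist (p t) y + dist y z + dist (q t) z := h3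
        _ ≤ η + 4 * η + η := by rw [dyz]; linarith
        _ ≤ 6 * δ₀ + ε := by simp [hη]; linarith

lemma slim_to_thin {δ₀ : ℝ} (hδ₀ : 0 ≤ δ₀) {a b c : X} {f g h : ℝ → X}
    (hf : IsGeodesic f a b) (hg : IsGeodesic g b c) (hh : IsGeodesic h a c)
    (slim : SlimTriangle δ₀ a b c f g h) : ThinTriangle (6 * δ₀) a b c f g h := by
  refine ⟨(dist a b + dist a c - dist b c)/2, (dist a b + dist b c - dist a c)/2,
    (dist a c + dist b c - dist a b)/2, ?_, ?_, ?_, by ring, by ring, by ring, ?_, ?_, ?_⟩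
  · linarith [dist_triangle b a c, dist_comm b a]
  · linarith [dist_triangle a b c]
  · linarith [dist_triangle a c b, dist_comm c b]
  · -- vertex a : sides f (to b) and h (to c), opposite side g
    intro t ht
    have hoSum : ∀ x ∈ GeodSide g b c, dist b x + dist c x = dist b c := by
      rintro x ⟨s, hs, rfl⟩
      rw [geo_dist_start hg hs, geo_dist_end hg hs]; ring
    have hoGeo : ∀ x ∈ GeodSide g b c, ∀ x' ∈ GeodSide g b c,
        dist x x' = |dist b x - dist b x'| := by
      rintro x ⟨s, hs, rfl⟩ x' ⟨s', hs', rfl⟩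
      rw [hg.2.2 s hs s' hs', geo_dist_start hg hs, geo_dist_start hg hs']
    have hsp : ∀ s ∈ Icc (0:ℝ) (dist a b),
        infDist (f s) (GeodSide h a c ∪ GeodSide g b c) ≤ δ₀ := by
      intro s hs
      rw [Set.union_comm]
      exact slim.1 _ (geo_mem_side hs)
    have hsq : ∀ s ∈ Icc (0:ℝ) (dist a c),
        infDist (h s) (GeodSide f a b ∪ GeodSide g b c) ≤ δ₀ := by
      intro s hs
      exact slim.2.2 _ (geo_mem_side hs)
    exact key_lemma hδ₀ hf hh hoSum hoGeo hsp hsq ht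
  · -- vertex b : sides (rev f) (to a) and g (to c), opposite side h
    intro t ht
    have hoSum : ∀ x ∈ GeodSide h a c, dist a x + dist c x = dist a c := by
      rintro x ⟨s, hs, rfl⟩
      rw [geo_dist_start hh hs, geo_dist_end hh hs]; ring
    have hoGeo : ∀ x ∈ GeodSide h a c, ∀ x' ∈ GeodSide h a c,
        dist x x' = |dist a x - dist a x'| := by
      rintro x ⟨s, hs, rfl⟩ x' ⟨s', hs', rfl⟩
      rw [hh.2.2 s hs s' hs', geo_dist_start hh hs, geo_dist_start hh hs']
    have hsp : ∀ s ∈ Icc (0:ℝ) (dist b a),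
        infDist (f (dist a b - s)) (GeodSide g b c ∪ GeodSide h a c) ≤ δ₀ := by
      intro s hs
      rw [dist_comm b a] at hs
      exact slim.1 _ ⟨dist a b - s, ⟨by linarith [hs.2], by linarith [hs.1]⟩, rfl⟩
    have hsq : ∀ s ∈ Icc (0:ℝ) (dist b c),
        infDist (g s) (GeodSide (fun u => f (dist a b - u)) b a ∪ GeodSide h a c) ≤ δ₀ := by
      intro s hs
      rw [geoSide_rev]
      exact slim.2.1 _ (geo_mem_side hs)
    have ht' : t ∈ Icc (0:ℝ) ((dist b a + dist b c - dist a c)/2) := by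
      rwa [dist_comm b a]
    exact key_lemma hδ₀ (geo_rev hf) hg hoSum hoGeo hsp hsq ht'
  · -- vertex c : sides (rev h) (to a) and (rev g) (to b), opposite side f
    intro t ht
    have hoSum : ∀ x ∈ GeodSide f a b, dist a x + dist b x = dist a b := by
      rintro x ⟨s, hs, rfl⟩
      rw [geo_dist_start hf hs, geo_dist_end hf hs]; ring
    have hoGeo : ∀ x ∈ GeodSide f a b, ∀ x' ∈ GeodSide f a b,
        dist x x' = |dist a x - dist a x'| := by
      rintro x ⟨s, hs, rfl⟩ x' ⟨s', hs', rfl⟩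
      rw [hf.2.2 s hs s' hs', geo_dist_start hf hs, geo_dist_start hf hs']
    have hsp : ∀ s ∈ Icc (0:ℝ) (dist c a),
        infDist (h (dist a c - s))
          (GeodSide (fun u => g (dist b c - u)) c b ∪ GeodSide f a b) ≤ δ₀ := by
      intro s hs
      rw [geoSide_rev, Set.union_comm]
      rw [dist_comm c a] at hs
      exact slim.2.2 _ ⟨dist a c - s, ⟨by linarith [hs.2], by linarith [hs.1]⟩, rfl⟩
    have hsq : ∀ s ∈ Icc (0:ℝ) (dist c b),
        infDist (g (dist b c - s))
          (GeodSide (fun u => h (dist a c - u)) c a ∪ GeodSide f a b) ≤ δ₀ := by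
      intro s hs
      rw [geoSide_rev, Set.union_comm]
      rw [dist_comm c b] at hs
      exact slim.2.1 _ ⟨dist b c - s, ⟨by linarith [hs.2], by linarith [hs.1]⟩, rfl⟩
    have ht' : t ∈ Icc (0:ℝ) ((dist c a + dist c b - dist a b)/2) := by
      rwa [dist_comm c a, dist_comm c b]
    exact key_lemma hδ₀ (geo_rev hh) (geo_rev hg) hoSum hoGeo hsp hsq ht'

lemma thin_to_slim {δ₁ : ℝ} {a b c : X} {f g h : ℝ → X}
    (thin : ThinTriangle δ₁ a b c f g h) : SlimTriangle δ₁ a b c f g h := by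
  obtain ⟨α, β, γ₀, hα, hβ, hγ, hab, hac, hbc, T1, T2, T3⟩ := thin
  refine ⟨?_, ?_, ?_⟩
  · rintro x ⟨t, ht, rfl⟩
    by_cases hcase : t ≤ α
    · calc infDist (f t) (GeodSide g b c ∪ GeodSide h a c)
          ≤ dist (f t) (h t) :=
            infDist_le_dist_of_mem (Or.inr ⟨t, ⟨ht.1, by linarith [ht.1, ht.2]⟩, rfl⟩)
        _ ≤ δ₁ := T1 t ⟨ht.1, hcase⟩
    · push_neg at hcase
      have key := T2 (dist a b - t) ⟨by linarith [ht.1, ht.2], by linarith [ht.1, ht.2]⟩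
      rw [show dist a b - (dist a b - t) = t by ring] at key
      calc infDist (f t) (GeodSide g b c ∪ GeodSide h a c)
          ≤ dist (f t) (g (dist a b - t)) :=
            infDist_le_dist_of_mem (Or.inl ⟨_, ⟨by linarith [ht.1, ht.2], by linarith [ht.1, ht.2]⟩, rfl⟩)
        _ ≤ δ₁ := key
  · rintro x ⟨t, ht, rfl⟩
    by_cases hcase : t ≤ β
    · calc infDist (g t) (GeodSide f a b ∪ GeodSide h a c)
          ≤ dist (g t) (f (dist a b - t)) :=
            infDist_le_dist_of_mem (Or.inl ⟨_, ⟨by linarith [ht.1, ht.2], by linarith [ht.1, ht.2]⟩, rfl⟩)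
        _ = dist (f (dist a b - t)) (g t) := dist_comm _ _
        _ ≤ δ₁ := T2 t ⟨ht.1, hcase⟩
    · push_neg at hcase
      have key := T3 (dist b c - t) ⟨by linarith [ht.1, ht.2], by linarith [ht.1, ht.2]⟩
      rw [show dist b c - (dist b c - t) = t by ring] at key
      calc infDist (g t) (GeodSide f a b ∪ GeodSide h a c)
          ≤ dist (g t) (h (dist a c - (dist b c - t))) :=
            infDist_le_dist_of_mem (Or.inr ⟨_, ⟨by linarith [ht.1, ht.2], by linarith [ht.1, ht.2]⟩, rfl⟩)
        _ = dist (h (dist a c - (dist b c - t))) (g t) := dist_comm _ _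
        _ ≤ δ₁ := key
  · rintro x ⟨t, ht, rfl⟩
    by_cases hcase : t ≤ α
    · calc infDist (h t) (GeodSide f a b ∪ GeodSide g b c)
          ≤ dist (h t) (f t) :=
            infDist_le_dist_of_mem (Or.inl ⟨t, ⟨ht.1, by linarith [ht.1, ht.2]⟩, rfl⟩)
        _ = dist (f t) (h t) := dist_comm _ _
        _ ≤ δ₁ := T1 t ⟨ht.1, hcase⟩
    · push_neg at hcase
      have key := T3 (dist a c - t) ⟨by linarith [ht.1, ht.2], by linarith [ht.1, ht.2]⟩
      rw [show dist a c - (dist a c - t) = t by ring] at key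
      calc infDist (h t) (GeodSide f a b ∪ GeodSide g b c)
          ≤ dist (h t) (g (dist b c - (dist a c - t))) :=
            infDist_le_dist_of_mem (Or.inr ⟨_, ⟨by linarith [ht.1, ht.2], by linarith [ht.1, ht.2]⟩, rfl⟩)
        _ ≤ δ₁ := key

end Helpers

/-- Slim triangles give thin triangles and conversely, with constants depending only on
each other. -/
theorem slim_thin_equivalence :
    (∀ δ₀ : ℝ, 0 ≤ δ₀ → ∃ δ₁ : ℝ, 0 ≤ δ₁ ∧
      ∀ (X : Type) [MetricSpace X], GeodesicSpace X →
        (∀ (a b c : X) (f g h : ℝ → X), IsGeodesic f a b → IsGeodesic g b c →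
          IsGeodesic h a c → SlimTriangle δ₀ a b c f g h) →
        (∀ (a b c : X) (f g h : ℝ → X), IsGeodesic f a b → IsGeodesic g b c →
          IsGeodesic h a c → ThinTriangle δ₁ a b c f g h)) ∧
    (∀ δ₁ : ℝ, 0 ≤ δ₁ → ∃ δ₀ : ℝ, 0 ≤ δ₀ ∧
      ∀ (X : Type) [MetricSpace X], GeodesicSpace X →
        (∀ (a b c : X) (f g h : ℝ → X), IsGeodesic f a b → IsGeodesic g b c →
          IsGeodesic h a c → ThinTriangle δ₁ a b c f g h) →
        (∀ (a b c : X) (f g h : ℝ → X), IsGeodesic f a b → IsGeodesic g b c →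
          IsGeodesic h a c → SlimTriangle δ₀ a b c f g h)) := by
  constructor
  · intro δ₀ hδ₀
    exact ⟨6 * δ₀, by linarith, fun X _ _ H a b c f g h hf hg hh =>
      slim_to_thin hδ₀ hf hg hh (H a b c f g h hf hg hh)⟩
  · intro δ₁ hδ₁
    exact ⟨δ₁, hδ₁, fun X _ _ H a b c f g h hf hg hh =>
      thin_to_slim (H a b c f g h hf hg hh)⟩
end

section
/- Let X and Y be geodesic δ-hyperbolic metric spaces and φ: X → Y a (λ,ε)-quasi-isometric embedding. There exists a constant C depending only on δ, λ, ε such that: if p ∈ X lies within distance 5δ of all three sides of a geodesic triangle △(a,b,c) in X, then φ(p) lies within distance C of all three sides of any geodesic triangle △(φ(a),φ(b),φ(c)) in Y. -/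
open Metric Set

/-!
The Morse lemma does the work. Let `γ` be a `(λ, ε)`-quasigeodesic and `σ` a geodesic between
its endpoints, and let `m = σ u` be the point of `σ` farthest from `γ`, at distance `R`. Go from
`σ (u - 2R)` to a nearby point `γ s`, along a geodesic to `γ t` and back to `σ (u + 2R)`. The
quadrilateral so formed is `2δ`-thin and its two short sides stay far from `m`, so `m` is
`2δ`-close to `[γ s, γ t]`. Bisecting a chain of `2 ^ k` points of `γ` with steps at most `λ + ε`
shows that `[γ s, γ t]` lies within `k δ + λ + ε` of `γ`. As `k` can be taken logarithmic in
`|s - t| = O(R)`, this bounds `R`. Conversely, `γ` stays near `σ`: a point of `σ` equidistant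
from `γ [0, t]` and `γ [t, L]` is close to both, hence, by the quasi-isometry inequality, to `γ t`.
Applied to the quasigeodesic `φ ∘ f` for each side `f` of the triangle, this puts `φ p` near every
side of the image triangle.
-/

lemma Metric.infDist_le_add_of_forall_infDist_le {Y : Type*} [MetricSpace Y] {x : Y}
    {S T : Set Y} {r r' : ℝ} (hx : infDist x T ≤ r) (hT : T.Nonempty)
    (hTS : ∀ y ∈ T, infDist y S ≤ r') : infDist x S ≤ r + r' := by
  refine le_of_forall_pos_le_add fun η hη => ?_
  obtain ⟨y, hy, hxy⟩ := (infDist_lt_iff hT).1 (hx.trans_lt (lt_add_of_pos_right r hη))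
  linarith [infDist_le_infDist_add_dist (x := x) (y := y) (s := S), hTS y hy]

lemma exists_near_of_far {Y : Type*} [MetricSpace Y] {Z : Set Y} {m x : Y} {R : ℝ}
    (hZ : Z.Nonempty) (hR : 0 ≤ R) (hmZ : ∀ z ∈ Z, R ≤ dist m z)
    (hx : x ∈ Z ∨ dist m x = 2 * R ∧ infDist x Z ≤ R) :
    ∃ z ∈ Z, dist x z ≤ R + 1 ∧ ∀ w, dist x w ≤ dist x z → R - 1 ≤ dist m w := by
  rcases hx with hxZ | ⟨hmx, hxZ⟩
  · refine ⟨x, hxZ, by rw [dist_self]; linarith, fun w hw => ?_⟩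
    rw [dist_self, dist_le_zero] at hw
    linarith [hmZ w (hw ▸ hxZ)]
  · obtain ⟨z, hz, hxz⟩ := (infDist_lt_iff hZ).1 (hxZ.trans_lt (lt_add_one R))
    refine ⟨z, hz, hxz.le, fun w hw => ?_⟩
    linarith [dist_triangle_right m x w]

section Geodesic

variable {Y : Type*} [MetricSpace Y] {γ : ℝ → Y} {a b : Y}

lemma IsGeodesic.left_mem_side (hγ : IsGeodesic γ a b) : a ∈ GeodSide γ a b :=
  ⟨0, left_mem_Icc.2 dist_nonneg, hγ.1⟩

lemma IsGeodesic.right_mem_side (hγ : IsGeodesic γ a b) : b ∈ GeodSide γ a b :=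
  ⟨dist a b, right_mem_Icc.2 dist_nonneg, hγ.2.1⟩

lemma IsGeodesic.dist_left_le_of_mem_side (hγ : IsGeodesic γ a b) {w : Y}
    (hw : w ∈ GeodSide γ a b) : dist a w ≤ dist a b := by
  obtain ⟨s, hs, rfl⟩ := hw
  calc dist a (γ s) = dist (γ 0) (γ s) := by rw [hγ.1]
    _ = |0 - s| := hγ.2.2 0 (left_mem_Icc.2 dist_nonneg) s hs
    _ ≤ dist a b := by rw [zero_sub, abs_neg, abs_of_nonneg hs.1]; exact hs.2

lemma IsGeodesic.continuousOn (hγ : IsGeodesic γ a b) : ContinuousOn γ (Icc 0 (dist a b)) :=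
  (LipschitzOnWith.of_dist_le_mul (K := 1) fun s hs t ht => by
    rw [hγ.2.2 s hs t ht, Real.dist_eq, NNReal.coe_one, one_mul]).continuousOn

lemma IsGeodesic.isCompact_side (hγ : IsGeodesic γ a b) : IsCompact (GeodSide γ a b) :=
  isCompact_Icc.image_of_continuousOn hγ.continuousOn

lemma IsGeodesic.dist_eq_sub (hγ : IsGeodesic γ a b) {u v : ℝ} (hu : 0 ≤ u) (huv : u ≤ v)
    (hv : v ≤ dist a b) : dist (γ u) (γ v) = v - u := by
  rw [hγ.2.2 u ⟨hu, huv.trans hv⟩ v ⟨hu.trans huv, hv⟩, abs_sub_comm,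
    abs_of_nonneg (sub_nonneg.2 huv)]

lemma IsGeodesic.restrict (hγ : IsGeodesic γ a b) {u v : ℝ} (hu : 0 ≤ u) (huv : u ≤ v)
    (hv : v ≤ dist a b) : IsGeodesic (fun t => γ (u + t)) (γ u) (γ v) := by
  have hIcc : ∀ t ∈ Icc 0 (dist (γ u) (γ v)), u + t ∈ Icc 0 (dist a b) := fun t ht => by
    rw [hγ.dist_eq_sub hu huv hv] at ht
    exact ⟨by linarith [ht.1], by linarith [ht.2]⟩
  refine ⟨by simp, by simp [hγ.dist_eq_sub hu huv hv], fun s hs t ht => ?_⟩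
  rw [hγ.2.2 _ (hIcc s hs) _ (hIcc t ht), add_sub_add_left_eq_sub]

lemma IsGeodesic.mem_side_restrict (hγ : IsGeodesic γ a b) {u v w : ℝ} (hu : 0 ≤ u)
    (hv : v ≤ dist a b) (hw : w ∈ Icc u v) :
    γ w ∈ GeodSide (fun t => γ (u + t)) (γ u) (γ v) := by
  refine ⟨w - u, ⟨sub_nonneg.2 hw.1, ?_⟩, by simp⟩
  rw [hγ.dist_eq_sub hu (hw.1.trans hw.2) hv]
  linarith [hw.2]

lemma IsGeodesic.eq_left_or_dist_eq (hγ : IsGeodesic γ a b) {u r : ℝ}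
    (hu : u ∈ Icc 0 (dist a b)) (hr : 0 ≤ r) :
    γ (max (u - r) 0) = a ∨ dist (γ u) (γ (max (u - r) 0)) = r := by
  rcases le_total (u - r) 0 with h | h
  · exact Or.inl (by rw [max_eq_right h, hγ.1])
  · right
    rw [max_eq_left h, dist_comm, hγ.dist_eq_sub h (by linarith) hu.2, sub_sub_cancel]

lemma IsGeodesic.eq_right_or_dist_eq (hγ : IsGeodesic γ a b) {u r : ℝ}
    (hu : u ∈ Icc 0 (dist a b)) (hr : 0 ≤ r) :
    γ (min (u + r) (dist a b)) = b ∨ dist (γ u) (γ (min (u + r) (dist a b))) = r := by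
  rcases le_total (dist a b) (u + r) with h | h
  · exact Or.inl (by rw [min_eq_right h, hγ.2.1])
  · right
    rw [min_eq_left h, hγ.dist_eq_sub hu.1 (by linarith) h, add_sub_cancel_left]

lemma IsGeodesic.exists_infDist_eq (hγ : IsGeodesic γ a b) {Z₁ Z₂ : Set Y} (ha : a ∈ Z₁)
    (hb : b ∈ Z₂) : ∃ v ∈ Icc 0 (dist a b), infDist (γ v) Z₁ = infDist (γ v) Z₂ := by
  have hcont : ContinuousOn (fun v => infDist (γ v) Z₁ - infDist (γ v) Z₂) (Icc 0 (dist a b)) :=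
    ((continuous_infDist_pt Z₁).comp_continuousOn hγ.continuousOn).sub
      ((continuous_infDist_pt Z₂).comp_continuousOn hγ.continuousOn)
  have h0 : infDist (γ 0) Z₁ - infDist (γ 0) Z₂ ≤ 0 := by
    rw [hγ.1, infDist_zero_of_mem ha, zero_sub, neg_nonpos]; exact infDist_nonneg
  have h1 : 0 ≤ infDist (γ (dist a b)) Z₁ - infDist (γ (dist a b)) Z₂ := by
    rw [hγ.2.1, infDist_zero_of_mem hb, sub_zero]; exact infDist_nonneg
  obtain ⟨v, hv, hv0⟩ := intermediate_value_Icc dist_nonneg hcont ⟨h0, h1⟩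
  exact ⟨v, hv, sub_eq_zero.1 hv0⟩

end Geodesic

section Hyperbolic

variable {Y : Type*} [MetricSpace Y] {δ : ℝ}

lemma DeltaHyperbolic.infDist_le_of_chain (hY : DeltaHyperbolic Y δ) (geodY : GeodesicSpace Y)
    {d : ℝ} (hd : 0 ≤ d) {S : Set Y} {k n : ℕ} {p : ℕ → Y} (hn : n ≤ 2 ^ k)
    (hS : ∀ i ≤ n, p i ∈ S) (hstep : ∀ i < n, dist (p i) (p (i + 1)) ≤ d) {σ : ℝ → Y}
    (hσ : IsGeodesic σ (p 0) (p n)) {m : Y} (hm : m ∈ GeodSide σ (p 0) (p n)) :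
    infDist m S ≤ k * δ + d := by
  induction k generalizing n p σ m with
  | zero =>
    have hend : dist (p 0) (p n) ≤ d := by
      interval_cases n
      · simpa using hd
      · exact hstep 0 one_pos
    calc infDist m S ≤ dist (p 0) m :=
          dist_comm m (p 0) ▸ infDist_le_dist_of_mem (hS 0 n.zero_le)
      _ ≤ d := (hσ.dist_left_le_of_mem_side hm).trans hend
      _ = ((0 : ℕ) : ℝ) * δ + d := by simp
  | succ k ih =>
    obtain ⟨f, hf⟩ := geodY (p 0) (p (n / 2))
    obtain ⟨g, hg⟩ := geodY (p (n / 2)) (p n)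
    have hsum : n / 2 + (n - n / 2) = n := by omega
    have hhalves : ∀ y ∈ GeodSide f (p 0) (p (n / 2)) ∪ GeodSide g (p (n / 2)) (p n),
        infDist y S ≤ k * δ + d := by
      rintro y (hy | hy)
      · exact ih (by omega) (fun i hi => hS i (by omega)) (fun i hi => hstep i (by omega)) hf hy
      · exact ih (n := n - n / 2) (p := fun i => p (n / 2 + i)) (by omega)
          (fun i hi => hS _ (by omega)) (fun i hi => hstep _ (by omega)) (σ := g)
          (by simpa [hsum]) (by simpa [hsum])
    have := Metric.infDist_le_add_of_forall_infDist_le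
      ((hY _ _ _ f g σ hf hg hσ).2.2 m hm) ⟨_, Or.inl hf.left_mem_side⟩ hhalves
    push_cast
    linarith

lemma DeltaHyperbolic.infDist_le_of_quadrilateral (hY : DeltaHyperbolic Y δ)
    (geodY : GeodesicSpace Y) (hδ : 0 ≤ δ) {x y x' y' : Y} {σ α β τ : ℝ → Y}
    (hσ : IsGeodesic σ x y) (hα : IsGeodesic α x x') (hβ : IsGeodesic β x' y')
    (hτ : IsGeodesic τ y y') {m : Y} (hm : m ∈ GeodSide σ x y) :
    infDist m (GeodSide α x x' ∪ GeodSide β x' y' ∪ GeodSide τ y y') ≤ δ + δ := by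
  obtain ⟨ρ, hρ⟩ := geodY x y'
  refine Metric.infDist_le_add_of_forall_infDist_le
    ((hY _ _ _ σ τ ρ hσ hτ hρ).1 m hm) ⟨_, Or.inl hτ.left_mem_side⟩ ?_
  rintro w (hw | hw)
  · rw [infDist_zero_of_mem (mem_union_right _ hw)]; exact hδ
  · exact (infDist_le_infDist_of_subset subset_union_left
      ⟨_, mem_union_left _ hα.left_mem_side⟩).trans ((hY _ _ _ α β ρ hα hβ hρ).2.2 w hw)

end Hyperbolic

lemma Nat.sq_le_two_pow_succ : ∀ k : ℕ, k ^ 2 ≤ 2 ^ (k + 1)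
  | 0 | 1 | 2 | 3 => by norm_num
  | k + 4 => by
    have ih : (k + 3) ^ 2 ≤ 2 ^ (k + 4) := Nat.sq_le_two_pow_succ (k + 3)
    calc (k + 4) ^ 2 ≤ 2 * (k + 3) ^ 2 := by ring_nf; omega
      _ ≤ 2 ^ (k + 4 + 1) := by rw [pow_succ 2 (k + 4)]; omega

lemma exists_le_two_pow_and_sq_le {x : ℝ} (hx : 0 ≤ x) :
    ∃ k : ℕ, x ≤ 2 ^ k ∧ (k : ℝ) ^ 2 ≤ 4 * x := by
  have hex : ∃ k : ℕ, x ≤ 2 ^ k := (pow_unbounded_of_one_lt x one_lt_two).imp fun _ => le_of_lt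
  classical
  refine ⟨Nat.find hex, Nat.find_spec hex, ?_⟩
  rcases Nat.eq_zero_or_eq_succ_pred (Nat.find hex) with h0 | hsucc
  · rw [h0]; push_cast; linarith
  · set j := (Nat.find hex).pred
    have hj : 2 ^ j < x := lt_of_not_ge (Nat.find_min hex (by omega : j < Nat.find hex))
    have hsq : ((j + 1 : ℕ) : ℝ) ^ 2 ≤ 2 ^ (j + 2) := by
      exact_mod_cast Nat.sq_le_two_pow_succ (j + 1)
    rw [hsucc]
    calc ((j + 1 : ℕ) : ℝ) ^ 2 ≤ 2 ^ (j + 2) := hsq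
      _ = 4 * 2 ^ j := by ring
      _ ≤ 4 * x := by linarith

lemma le_of_le_nat_mul_add_of_sq_le {R δ a b c : ℝ} {k : ℕ} (hδ : 0 ≤ δ) (ha : 0 ≤ a)
    (hb : 0 ≤ a * c + b) (hR : R ≤ k * δ + c) (hk : (k : ℝ) ^ 2 ≤ a * R + b) :
    R ≤ (a * δ + (a * c + b)) * δ + c := by
  have hk' : (k : ℝ) ≤ a * δ + (a * c + b) := by
    rcases Nat.eq_zero_or_pos k with rfl | hpos
    · simp only [Nat.cast_zero]; positivity
    · have h1 : (1 : ℝ) ≤ k := by exact_mod_cast hpos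
      nlinarith [mul_le_mul_of_nonneg_left hR ha]
  nlinarith [mul_le_mul_of_nonneg_right hk' hδ]

def quasigeodesicNbhdRadius (δ lam eps : ℝ) : ℝ :=
  (24 * lam * δ + (24 * lam * (lam + eps + 2 * δ + 2) + 4 * lam * (2 + eps))) * δ
    + (lam + eps + 2 * δ + 2)

lemma quasigeodesicNbhdRadius_nonneg {δ lam eps : ℝ} (hδ : 0 ≤ δ) (hlam : 0 ≤ lam)
    (heps : 0 ≤ eps) : 0 ≤ quasigeodesicNbhdRadius δ lam eps := by
  unfold quasigeodesicNbhdRadius; positivity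

def geodesicNbhdRadius (δ lam eps : ℝ) : ℝ :=
  lam * (lam * (2 * quasigeodesicNbhdRadius δ lam eps + 2 + eps)) + eps
    + (quasigeodesicNbhdRadius δ lam eps + 1)

lemma geodesicNbhdRadius_nonneg {δ lam eps : ℝ} (hδ : 0 ≤ δ) (hlam : 0 ≤ lam)
    (heps : 0 ≤ eps) : 0 ≤ geodesicNbhdRadius δ lam eps := by
  have := quasigeodesicNbhdRadius_nonneg hδ hlam heps
  unfold geodesicNbhdRadius; positivity

section Quasigeodesic

variable {X Y : Type*} [MetricSpace X] [MetricSpace Y] {δ lam eps L : ℝ} {γ : ℝ → Y}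

lemma IsQuasigeodesic.abs_sub_le (hγ : IsQuasigeodesic lam eps γ L) (hlam : 0 < lam) {s t : ℝ}
    (hs : s ∈ Icc 0 L) (ht : t ∈ Icc 0 L) : |s - t| ≤ lam * (dist (γ s) (γ t) + eps) := by
  have := (hγ s hs t ht).1
  rw [← div_le_iff₀' hlam]
  linarith

lemma QIEmbedding.isQuasigeodesic_comp {φ : X → Y} (hφ : QIEmbedding lam eps φ) {f : ℝ → X}
    {a b : X} (hf : IsGeodesic f a b) : IsQuasigeodesic lam eps (φ ∘ f) (dist a b) :=
  fun s hs t ht => hf.2.2 s hs t ht ▸ hφ (f s) (f t)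

lemma IsQuasigeodesic.infDist_image_le_of_mem_side (hY : DeltaHyperbolic Y δ)
    (geodY : GeodesicSpace Y) (hγ : IsQuasigeodesic lam eps γ L) (hlam : 0 ≤ lam)
    (heps : 0 ≤ eps) {s t : ℝ} (hs : s ∈ Icc 0 L) (ht : t ∈ Icc 0 L) {k : ℕ}
    (hk : |t - s| ≤ 2 ^ k) {β : ℝ → Y} (hβ : IsGeodesic β (γ s) (γ t)) {w : Y}
    (hw : w ∈ GeodSide β (γ s) (γ t)) :
    infDist w (γ '' Icc 0 L) ≤ k * δ + (lam + eps) := by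
  have hN : (0 : ℝ) < 2 ^ k := by positivity
  set θ : ℕ → ℝ := fun i => s + ((i : ℝ) / 2 ^ k) • (t - s)
  have hθ : ∀ i : ℕ, i ≤ 2 ^ k → θ i ∈ Icc 0 L := fun i hi =>
    (convex_Icc 0 L).add_smul_sub_mem hs ht
      ⟨by positivity, div_le_one_of_le₀ (by exact_mod_cast hi) hN.le⟩
  have hgap : ∀ i : ℕ, |θ i - θ (i + 1)| ≤ 1 := fun i => by
    rw [show θ i - θ (i + 1) = -((t - s) / 2 ^ k) by
        simp only [θ, smul_eq_mul]; push_cast; ring,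
      abs_neg, abs_div, abs_of_pos hN]
    exact div_le_one_of_le₀ hk hN.le
  have hstep : ∀ i < 2 ^ k, dist (γ (θ i)) (γ (θ (i + 1))) ≤ lam + eps := fun i hi => by
    nlinarith [(hγ _ (hθ i hi.le) _ (hθ (i + 1) hi)).2, hgap i]
  have hp0 : γ (θ 0) = γ s := by simp [θ]
  have hpN : γ (θ (2 ^ k)) = γ t := by simp [θ, hN.ne']
  rw [← hp0, ← hpN] at hβ hw
  exact hY.infDist_le_of_chain geodY (add_nonneg hlam heps) (S := γ '' Icc 0 L)
    (p := fun i => γ (θ i)) le_rfl (fun i hi => ⟨_, hθ i hi, rfl⟩) hstep hβ hw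

lemma IsQuasigeodesic.le_of_detour (hY : DeltaHyperbolic Y δ) (geodY : GeodesicSpace Y)
    (hδ : 0 ≤ δ) (hγ : IsQuasigeodesic lam eps γ L) (hlam : 0 ≤ lam) (heps : 0 ≤ eps) {R : ℝ}
    {m x y : Y} {σ : ℝ → Y} (hσ : IsGeodesic σ x y) (hm : m ∈ GeodSide σ x y)
    (hmZ : ∀ z ∈ γ '' Icc 0 L, R ≤ dist m z) {s t : ℝ} (hs : s ∈ Icc 0 L) (ht : t ∈ Icc 0 L)
    {k : ℕ} (hk : |t - s| ≤ 2 ^ k) (hx : ∀ w, dist x w ≤ dist x (γ s) → R - 1 ≤ dist m w)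
    (hy : ∀ w, dist y w ≤ dist y (γ t) → R - 1 ≤ dist m w) :
    R ≤ k * δ + (lam + eps + 2 * δ + 2) := by
  obtain ⟨α, hα⟩ := geodY x (γ s)
  obtain ⟨β, hβ⟩ := geodY (γ s) (γ t)
  obtain ⟨τ, hτ⟩ := geodY y (γ t)
  have hquad := hY.infDist_le_of_quadrilateral geodY hδ hσ hα hβ hτ hm
  obtain ⟨w, hw, hmw⟩ := (infDist_lt_iff (nonempty_of_mem hτ.left_mem_side).inr).1
    (hquad.trans_lt (lt_add_one _))
  have hkδ : 0 ≤ k * δ := by positivity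
  rcases hw with (hw | hw) | hw
  · linarith [hx w (hα.dist_left_le_of_mem_side hw)]
  · have hmZ' : R ≤ infDist m (γ '' Icc 0 L) :=
      (le_infDist (nonempty_of_mem (mem_image_of_mem γ hs))).2 hmZ
    linarith [infDist_le_infDist_add_dist (x := m) (y := w) (s := γ '' Icc 0 L),
      hγ.infDist_image_le_of_mem_side hY geodY hlam heps hs ht hk hβ hw]
  · linarith [hy w (hτ.dist_left_le_of_mem_side hw)]

theorem IsQuasigeodesic.infDist_image_le (hY : DeltaHyperbolic Y δ) (geodY : GeodesicSpace Y)
    (hδ : 0 ≤ δ) (hγ : IsQuasigeodesic lam eps γ L) (hlam : 0 < lam) (heps : 0 ≤ eps)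
    (hL : 0 ≤ L) {σ : ℝ → Y} (hσ : IsGeodesic σ (γ 0) (γ L)) {m : Y}
    (hm : m ∈ GeodSide σ (γ 0) (γ L)) :
    infDist m (γ '' Icc 0 L) ≤ quasigeodesicNbhdRadius δ lam eps := by
  set Z := γ '' Icc 0 L
  set D := dist (γ 0) (γ L)
  have h0Z : γ 0 ∈ Z := mem_image_of_mem γ (left_mem_Icc.2 hL)
  have hLZ : γ L ∈ Z := mem_image_of_mem γ (right_mem_Icc.2 hL)
  have hZ : Z.Nonempty := nonempty_of_mem h0Z
  obtain ⟨u, hu, hmax⟩ := isCompact_Icc.exists_isMaxOn (nonempty_Icc.2 dist_nonneg)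
    ((continuous_infDist_pt Z).comp_continuousOn hσ.continuousOn)
  suffices hR : infDist (σ u) Z ≤ quasigeodesicNbhdRadius δ lam eps by
    obtain ⟨v, hv, rfl⟩ := hm
    exact (hmax hv).trans hR
  set R := infDist (σ u) Z
  have hR : 0 ≤ R := infDist_nonneg
  have hfar : ∀ z ∈ Z, R ≤ dist (σ u) z := (le_infDist hZ).1 le_rfl
  set u₁ := max (u - 2 * R) 0
  set u₂ := min (u + 2 * R) D
  have hu₁ : u₁ ∈ Icc 0 u := ⟨le_max_right _ _, max_le (by linarith) hu.1⟩
  have hu₂ : u₂ ∈ Icc u D := ⟨le_min (by linarith) hu.2, min_le_right _ _⟩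
  obtain ⟨_, ⟨s, hs, rfl⟩, hxs, hx⟩ := exists_near_of_far hZ hR hfar
    ((hσ.eq_left_or_dist_eq hu (by positivity)).imp (· ▸ h0Z) fun h =>
      ⟨h, hmax ⟨hu₁.1, hu₁.2.trans hu.2⟩⟩)
  obtain ⟨_, ⟨t, ht, rfl⟩, hyt, hy⟩ := exists_near_of_far hZ hR hfar
    ((hσ.eq_right_or_dist_eq hu (by positivity)).imp (· ▸ hLZ) fun h =>
      ⟨h, hmax ⟨hu.1.trans hu₂.1, hu₂.2⟩⟩)
  obtain ⟨k, hk, hk2⟩ := exists_le_two_pow_and_sq_le (abs_nonneg (t - s))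
  have hRk : R ≤ k * δ + (lam + eps + 2 * δ + 2) :=
    hγ.le_of_detour hY geodY hδ hlam.le heps (hσ.restrict hu₁.1 (hu₁.2.trans hu₂.1) hu₂.2)
      (hσ.mem_side_restrict hu₁.1 hu₂.2 ⟨hu₁.2, hu₂.1⟩) hfar hs ht hk hx hy
  have hst : dist (γ t) (γ s) ≤ 6 * R + 2 := by
    have h12 : dist (σ u₁) (σ u₂) ≤ 4 * R := by
      rw [hσ.dist_eq_sub hu₁.1 (hu₁.2.trans hu₂.1) hu₂.2]
      linarith [le_max_left (u - 2 * R) 0, min_le_left (u + 2 * R) D]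
    linarith [dist_triangle4 (γ t) (σ u₂) (σ u₁) (γ s), dist_comm (γ t) (σ u₂),
      dist_comm (σ u₂) (σ u₁)]
  have hk2' : (k : ℝ) ^ 2 ≤ 24 * lam * R + 4 * lam * (2 + eps) := by
    nlinarith [hγ.abs_sub_le hlam ht hs]
  exact le_of_le_nat_mul_add_of_sq_le hδ (by positivity) (by positivity) hRk hk2'

theorem IsQuasigeodesic.infDist_side_le (hY : DeltaHyperbolic Y δ) (geodY : GeodesicSpace Y)
    (hδ : 0 ≤ δ) (hγ : IsQuasigeodesic lam eps γ L) (hlam : 0 < lam) (heps : 0 ≤ eps)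
    {σ : ℝ → Y} (hσ : IsGeodesic σ (γ 0) (γ L)) {t : ℝ} (ht : t ∈ Icc 0 L) :
    infDist (γ t) (GeodSide σ (γ 0) (γ L)) ≤ geodesicNbhdRadius δ lam eps := by
  set R₀ := quasigeodesicNbhdRadius δ lam eps
  obtain ⟨v, hv, heq⟩ := hσ.exists_infDist_eq (Z₁ := γ '' Icc 0 t) (Z₂ := γ '' Icc t L)
    (mem_image_of_mem γ (left_mem_Icc.2 ht.1)) (mem_image_of_mem γ (right_mem_Icc.2 ht.2))
  obtain ⟨_, ⟨r, hr, rfl⟩, hvr⟩ := (infDist_lt_iff (nonempty_of_mem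
    (mem_image_of_mem γ (left_mem_Icc.2 (ht.1.trans ht.2))))).1
    ((hγ.infDist_image_le hY geodY hδ hlam heps (ht.1.trans ht.2) hσ
      (mem_image_of_mem σ hv)).trans_lt (lt_add_one R₀))
  have hnear : infDist (σ v) (γ '' Icc 0 t) < R₀ + 1 := by
    rcases le_total r t with hrt | hrt
    · exact (infDist_le_dist_of_mem (s := γ '' Icc 0 t) ⟨r, ⟨hr.1, hrt⟩, rfl⟩).trans_lt hvr
    · rw [heq]
      exact (infDist_le_dist_of_mem (s := γ '' Icc t L) ⟨r, ⟨hrt, hr.2⟩, rfl⟩).trans_lt hvr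
  obtain ⟨_, ⟨s₁, hs₁, rfl⟩, hd₁⟩ :=
    (infDist_lt_iff (nonempty_of_mem (mem_image_of_mem γ (left_mem_Icc.2 ht.1)))).1 hnear
  obtain ⟨_, ⟨s₂, hs₂, rfl⟩, hd₂⟩ :=
    (infDist_lt_iff (nonempty_of_mem (mem_image_of_mem γ (right_mem_Icc.2 ht.2)))).1
      (heq ▸ hnear)
  have hs₁' : s₁ ∈ Icc 0 L := ⟨hs₁.1, hs₁.2.trans ht.2⟩
  have hs₂' : s₂ ∈ Icc 0 L := ⟨ht.1.trans hs₂.1, hs₂.2⟩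
  have h12 : |s₁ - s₂| ≤ lam * (2 * R₀ + 2 + eps) := by
    refine (hγ.abs_sub_le hlam hs₁' hs₂').trans (mul_le_mul_of_nonneg_left ?_ hlam.le)
    linarith [dist_triangle_left (γ s₁) (γ s₂) (σ v)]
  have ht1 : |t - s₁| ≤ |s₁ - s₂| := by
    rw [abs_of_nonneg (sub_nonneg.2 hs₁.2), abs_sub_comm,
      abs_of_nonneg (by linarith [hs₁.2, hs₂.1])]
    linarith [hs₂.1]
  calc infDist (γ t) (GeodSide σ (γ 0) (γ L)) ≤ dist (γ t) (σ v) :=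
        infDist_le_dist_of_mem (mem_image_of_mem σ hv)
    _ ≤ dist (γ t) (γ s₁) + dist (σ v) (γ s₁) := dist_triangle_right _ _ _
    _ ≤ (lam * |t - s₁| + eps) + (R₀ + 1) := add_le_add (hγ t ht s₁ hs₁').2 hd₁.le
    _ ≤ geodesicNbhdRadius δ lam eps := by
      unfold geodesicNbhdRadius
      gcongr
      exact ht1.trans h12

lemma QIEmbedding.infDist_side_le (hY : DeltaHyperbolic Y δ) (geodY : GeodesicSpace Y)
    (hδ : 0 ≤ δ) (hlam : 0 < lam) (heps : 0 ≤ eps) {φ : X → Y} (hφ : QIEmbedding lam eps φ)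
    {a b : X} {f : ℝ → X} (hf : IsGeodesic f a b) {f' : ℝ → Y} (hf' : IsGeodesic f' (φ a) (φ b))
    (p : X) :
    infDist (φ p) (GeodSide f' (φ a) (φ b))
      ≤ lam * infDist p (GeodSide f a b) + eps + geodesicNbhdRadius δ lam eps := by
  obtain ⟨_, ⟨t, ht, rfl⟩, hpt⟩ :=
    hf.isCompact_side.exists_infDist_eq_dist (nonempty_of_mem hf.left_mem_side) p
  have h0 : (φ ∘ f) 0 = φ a := congrArg φ hf.1
  have h1 : (φ ∘ f) (dist a b) = φ b := congrArg φ hf.2.1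
  have hnear := (hφ.isQuasigeodesic_comp hf).infDist_side_le hY geodY hδ hlam heps
    (h0 ▸ h1 ▸ hf') ht
  rw [h0, h1, Function.comp_apply] at hnear
  rw [hpt]
  linarith [infDist_le_infDist_add_dist (x := φ p) (y := φ (f t))
    (s := GeodSide f' (φ a) (φ b)), (hφ p (f t)).2]

end Quasigeodesic

/-- Quasi-isometric embeddings coarsely preserve quasi-centers of geodesic triangles. -/
theorem qie_preserves_quasicenters :
    ∀ δ lam eps : ℝ, 0 ≤ δ → 1 ≤ lam → 0 ≤ eps →
      ∃ C : ℝ, 0 ≤ C ∧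
        ∀ (X Y : Type) [MetricSpace X] [MetricSpace Y],
          GeodesicSpace X → DeltaHyperbolic X δ →
          GeodesicSpace Y → DeltaHyperbolic Y δ →
          ∀ φ : X → Y, QIEmbedding lam eps φ →
            ∀ (a b c : X) (f g h : ℝ → X),
              IsGeodesic f a b → IsGeodesic g b c → IsGeodesic h a c →
              ∀ p : X,
                Metric.infDist p (GeodSide f a b) ≤ 5 * δ →
                Metric.infDist p (GeodSide g b c) ≤ 5 * δ →
                Metric.infDist p (GeodSide h a c) ≤ 5 * δ →
                ∀ f' g' h' : ℝ → Y,
                  IsGeodesic f' (φ a) (φ b) → IsGeodesic g' (φ b) (φ c) →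
                  IsGeodesic h' (φ a) (φ c) →
                    Metric.infDist (φ p) (GeodSide f' (φ a) (φ b)) ≤ C ∧
                    Metric.infDist (φ p) (GeodSide g' (φ b) (φ c)) ≤ C ∧
                    Metric.infDist (φ p) (GeodSide h' (φ a) (φ c)) ≤ C := by
  intro δ lam eps hδ hlam heps
  have hlam₀ : 0 < lam := by linarith
  refine ⟨lam * (5 * δ) + eps + geodesicNbhdRadius δ lam eps,
    by have := geodesicNbhdRadius_nonneg hδ hlam₀.le heps; positivity, ?_⟩
  intro X Y _ _ _ _ geodY hypY φ hφ a b c f g h hf hg hh p hpf hpg hph f' g' h' hf' hg' hh'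
  have hside : ∀ {x y : X} {e : ℝ → X} {e' : ℝ → Y}, IsGeodesic e x y →
      IsGeodesic e' (φ x) (φ y) → infDist p (GeodSide e x y) ≤ 5 * δ →
      infDist (φ p) (GeodSide e' (φ x) (φ y))
        ≤ lam * (5 * δ) + eps + geodesicNbhdRadius δ lam eps :=
    fun he he' hp => (hφ.infDist_side_le hypY geodY hδ hlam₀ heps he he' p).trans (by gcongr)
  exact ⟨hside hf hf' hpf, hside hg hg' hpg, hside hh hh' hph⟩
end

section
/- Let X be a geodesic δ-hyperbolic metric space. Let △(a,b,c) and △(a,c,d) be two geodesic triangles sharing the side [a,c], with a,b,c,d ∈ X pairwise distinct. Let p ∈ [a,c] lie within distance r of both [a,b] and [b,c], and let q ∈ [a,c] lie within distance r of both [a,d] and [c,d]. Then | |[a,b,c,d]| − d(p,q) | ≤ C, where [a,b,c,d] = ½( d(a,d) − d(d,c) + d(b,c) − d(a,b) ) and C depends only on δ and r. -/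
open Metric Set

lemma geod_dist_left {X : Type*} [MetricSpace X] {γ : ℝ → X} {a b : X}
    (hγ : IsGeodesic γ a b) {s : ℝ} (hs : s ∈ Set.Icc (0:ℝ) (dist a b)) :
    dist a (γ s) = s := by
  obtain ⟨h0, _, hiso⟩ := hγ
  have h1 := hiso s hs 0 ⟨le_refl 0, dist_nonneg⟩
  rw [h0] at h1
  rw [dist_comm, h1]
  simp [abs_of_nonneg hs.1]

lemma geod_dist_right {X : Type*} [MetricSpace X] {γ : ℝ → X} {a b : X}
    (hγ : IsGeodesic γ a b) {s : ℝ} (hs : s ∈ Set.Icc (0:ℝ) (dist a b)) :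
    dist (γ s) b = dist a b - s := by
  obtain ⟨_, hL, hiso⟩ := hγ
  have h2 := hiso s hs (dist a b) ⟨dist_nonneg, le_refl _⟩
  rw [hL] at h2
  rw [h2, abs_of_nonpos (by linarith [hs.2])]
  ring

lemma geod_exists_near {X : Type*} [MetricSpace X] {γ : ℝ → X} {a b : X}
    (hγ : IsGeodesic γ a b) {p : X} {r : ℝ}
    (hr : Metric.infDist p (GeodSide γ a b) ≤ r) :
    ∃ s ∈ Set.Icc (0:ℝ) (dist a b), dist p (γ s) ≤ r := by
  have hlip : LipschitzOnWith 1 γ (Set.Icc (0:ℝ) (dist a b)) := by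
    apply LipschitzOnWith.of_dist_le_mul
    intro x hx y hy
    rw [hγ.2.2 x hx y hy]
    simp [Real.dist_eq]
  have hcomp : IsCompact (GeodSide γ a b) :=
    isCompact_Icc.image_of_continuousOn hlip.continuousOn
  have hne : (GeodSide γ a b).Nonempty :=
    ⟨γ 0, 0, ⟨le_refl 0, dist_nonneg⟩, rfl⟩
  obtain ⟨x, hx, hdx⟩ := hcomp.exists_infDist_eq_dist hne p
  obtain ⟨s, hs, rfl⟩ := hx
  exact ⟨s, hs, by rw [← hdx]; exact hr⟩

lemma quasicenter_upper {X : Type*} [MetricSpace X] {a b c p x : X} {t r : ℝ}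
    (h1 : dist a p = t) (h2 : dist p c = dist a c - t)
    (h3 : dist p x ≤ r) (hx : dist a x + dist x b = dist a b) :
    t ≤ (dist a b + dist a c - dist b c) / 2 + r := by
  have t1 : dist a p ≤ dist a x + dist x p := dist_triangle a x p
  have t2 : dist b c ≤ dist b x + dist x p + dist p c :=
    dist_triangle4 b x p c
  have e1 : dist x p = dist p x := dist_comm x p
  have e2 : dist b x = dist x b := dist_comm b x
  linarith

lemma quasicenter_lower {X : Type*} [MetricSpace X] {a b c p y : X} {t r : ℝ}
    (h1 : dist a p = t) (h2 : dist p c = dist a c - t)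
    (h3 : dist p y ≤ r) (hy : dist b y + dist y c = dist b c) :
    (dist a b + dist a c - dist b c) / 2 - r ≤ t := by
  have t1 : dist a b ≤ dist a p + dist p y + dist y b :=
    dist_triangle4 a p y b
  have t2 : dist p c ≤ dist p y + dist y c := dist_triangle p y c
  have e1 : dist y b = dist b y := dist_comm y b
  linarith

/-- The cross-ratio of four points is, up to a constant depending only on δ and r,
the distance between approximate quasi-centers on the common side. -/
theorem crossRatio_approx_dist_quasicenters :
    ∀ δ r : ℝ, 0 ≤ δ → 0 ≤ r → ∃ C : ℝ, 0 ≤ C ∧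
      ∀ (X : Type) [MetricSpace X], GeodesicSpace X → DeltaHyperbolic X δ →
        ∀ (a b c d : X), a ≠ b → a ≠ c → a ≠ d → b ≠ c → b ≠ d → c ≠ d →
          ∀ (f g h k₁ k₂ : ℝ → X),
            IsGeodesic f a b → IsGeodesic g b c → IsGeodesic h a c →
            IsGeodesic k₁ a d → IsGeodesic k₂ c d →
            ∀ p ∈ GeodSide h a c,
              Metric.infDist p (GeodSide f a b) ≤ r →
              Metric.infDist p (GeodSide g b c) ≤ r →
              ∀ q ∈ GeodSide h a c,
                Metric.infDist q (GeodSide k₁ a d) ≤ r →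
                Metric.infDist q (GeodSide k₂ c d) ≤ r →
                  abs (|crossRatio a b c d| - dist p q) ≤ C := by
  intro δ r _ hr
  refine ⟨2 * r, by linarith, ?_⟩
  intro X _ _ _ a b c d _ _ _ _ _ _ f g h k₁ k₂ hf hg hh hk₁ hk₂
    p hp hpf hpg q hq hqk₁ hqk₂
  obtain ⟨tp, htp, rfl⟩ := hp
  obtain ⟨tq, htq, rfl⟩ := hq
  -- distances along the common side
  have hap : dist a (h tp) = tp := geod_dist_left hh htp
  have hpc : dist (h tp) c = dist a c - tp := geod_dist_right hh htp
  have haq : dist a (h tq) = tq := geod_dist_left hh htq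
  have hqc : dist (h tq) c = dist a c - tq := geod_dist_right hh htq
  -- bounds on tp
  obtain ⟨s, hs, hdx⟩ := geod_exists_near hf hpf
  have hxsum : dist a (f s) + dist (f s) b = dist a b := by
    rw [geod_dist_left hf hs, geod_dist_right hf hs]; ring
  have hup_p : tp ≤ (dist a b + dist a c - dist b c) / 2 + r :=
    quasicenter_upper hap hpc hdx hxsum
  obtain ⟨u, hu, hdy⟩ := geod_exists_near hg hpg
  have hysum : dist b (g u) + dist (g u) c = dist b c := by
    rw [geod_dist_left hg hu, geod_dist_right hg hu]; ring
  have hlo_p : (dist a b + dist a c - dist b c) / 2 - r ≤ tp :=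
    quasicenter_lower hap hpc hdy hysum
  -- bounds on tq
  obtain ⟨s', hs', hdx'⟩ := geod_exists_near hk₁ hqk₁
  have hxsum' : dist a (k₁ s') + dist (k₁ s') d = dist a d := by
    rw [geod_dist_left hk₁ hs', geod_dist_right hk₁ hs']; ring
  have hup_q : tq ≤ (dist a d + dist a c - dist d c) / 2 + r :=
    quasicenter_upper haq hqc hdx' hxsum'
  obtain ⟨u', hu', hdy'⟩ := geod_exists_near hk₂ hqk₂
  have hysum' : dist d (k₂ u') + dist (k₂ u') c = dist d c := by
    have h1 : dist c (k₂ u') = u' := geod_dist_left hk₂ hu'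
    have h2 : dist (k₂ u') d = dist c d - u' := geod_dist_right hk₂ hu'
    rw [dist_comm d (k₂ u'), h2, dist_comm (k₂ u') c, h1, dist_comm d c]
    ring
  have hlo_q : (dist a d + dist a c - dist d c) / 2 - r ≤ tq :=
    quasicenter_lower haq hqc hdy' hysum'
  -- distance between p and q
  have hdpq : dist (h tp) (h tq) = |tp - tq| := hh.2.2 tp htp tq htq
  rw [hdpq]
  have key : |crossRatio a b c d - (tq - tp)| ≤ 2 * r := by
    rw [abs_le]
    constructor <;> · simp only [crossRatio]; linarith
  calc abs (abs (crossRatio a b c d) - abs (tp - tq))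
      = abs (abs (crossRatio a b c d) - abs (tq - tp)) := by rw [abs_sub_comm tp tq]
    _ ≤ abs (crossRatio a b c d - (tq - tp)) := abs_abs_sub_abs_le_abs_sub _ _
    _ ≤ 2 * r := key
end
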